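/- Let X_1,…,X_n be real-valued random variables on a common probability space (not assumed independent) such that for each j there exists t > 0 with E e^{tX_j} < ∞. Then for every u ∈ ℝ, P(X_1 + ⋯ + X_n > L_{X_1}^{*←}(u) + ⋯ + L_{X_n}^{*←}(u)) ≤ e^{−u}, with the conventions that the event is the whole space if the sum of the bounds is −∞ and empty if it is ∞. -/

import Mathlib

open Set MeasureTheory Filter

/-- Legendre–Fenchel transform `L^*(x) = sup_{t>0} [t·x − L(t)]`, with values in `[-∞,∞]`. -/
noncomputable def LF (L : ℝ → EReal) (x : ℝ) : EReal :=
  ⨆ (t : ℝ) (_ : 0 < t), ((t * x : ℝ) : EReal) - L t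

/-- Smallest generalized inverse `L^{*←}(u) = inf {x ∈ ℝ : L^*(x) ≥ u}`, with `inf ∅ = ∞`. -/
noncomputable def geInv (L : ℝ → EReal) (u : ℝ) : EReal :=
  sInf ((fun x : ℝ => (x : EReal)) '' {x : ℝ | (u : EReal) ≤ LF L x})

/-- Largest generalized inverse `L^{*⇐}(u) = inf {x ∈ ℝ : L^*(x) > u}`, with `inf ∅ = ∞`. -/
noncomputable def tgeInv (L : ℝ → EReal) (u : ℝ) : EReal :=
  sInf ((fun x : ℝ => (x : EReal)) '' {x : ℝ | (u : EReal) < LF L x})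

/-- Hölder convolution `(L_1 ⊞ ⋯ ⊞ L_n)(t) = inf { Σ_j α_j L_j(t/α_j) : α_j > 0, Σ_j α_j = 1 }`,
with `inf ∅ = ∞`. -/
noncomputable def hconv (n : ℕ) (L : Fin n → ℝ → EReal) (t : ℝ) : EReal :=
  ⨅ (α : Fin n → ℝ) (_ : (∀ j, 0 < α j) ∧ ∑ j, α j = 1),
    ∑ j, (α j : EReal) * L j (t / α j)

/-- Cramér–Chernoff function `L_X(t) = ln E e^{tX}`, with values in `(-∞,∞]`. -/
noncomputable def cramer {Ω : Type*} [MeasurableSpace Ω] (μ : Measure Ω) (X : Ω → ℝ)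
    (t : ℝ) : EReal :=
  ENNReal.log (∫⁻ ω, ENNReal.ofReal (Real.exp (t * X ω)) ∂μ)

/-! For `u ≤ 0` the bound is trivial. For `u > 0`, fix a real `c` above `∑ j, L_j^{*←}(u)` and
choose reals `y_j > L_j^{*←}(u)` with `∑ j, y_j ≤ c`; then `L_j^*(y_j) ≥ u`, so for every `v < u`
there are `t_j > 0` with `L_j(t_j) < t_j y_j - v`. Hölder's inequality with exponents `τ / t_j`,
where `τ = (∑ j, 1 / t_j)⁻¹`, gives
`E e^{τ ∑ X_j} ≤ ∏ j, (E e^{t_j X_j})^{τ / t_j} ≤ e^{τ ∑ y_j - v}`,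
and Markov's inequality at `τ` yields `P(∑ X_j ≥ c) ≤ e^{-v}`.

The quantiles are `> -∞` when `u > 0` because `P(X_j ≥ m) → 1` as `m → -∞`; this rules out
`⊥ + ⊤` in the sum of quantiles. -/

open scoped ENNReal Topology

lemma EReal.coe_finset_sum {ι : Type*} (s : Finset ι) (f : ι → ℝ) :
    ((∑ i ∈ s, f i : ℝ) : EReal) = ∑ i ∈ s, (f i : EReal) :=
  map_sum (⟨⟨Real.toEReal, EReal.coe_zero⟩, EReal.coe_add⟩ : ℝ →+ EReal) f s

lemma EReal.finset_sum_ne_bot {ι : Type*} {s : Finset ι} {a : ι → EReal}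
    (ha : ∀ i ∈ s, a i ≠ ⊥) : ∑ i ∈ s, a i ≠ ⊥ :=
  Finset.sum_induction a (· ≠ ⊥) (fun _ _ hx hy => EReal.add_ne_bot_iff.2 ⟨hx, hy⟩)
    EReal.zero_ne_bot ha

lemma EReal.exists_lt_forall_sum_le {ι : Type*} [Fintype ι] {a : ι → EReal} {c : ℝ}
    (ha : ∀ i, a i ≠ ⊥) (hc : ∑ i, a i < c) :
    ∃ y : ι → ℝ, (∀ i, a i < y i) ∧ ∑ i, y i ≤ c := by
  classical
  have ha_top : ∀ i, a i ≠ ⊤ := by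
    intro i hi
    rw [← Finset.add_sum_erase _ _ (Finset.mem_univ i), hi,
      EReal.top_add_of_ne_bot (EReal.finset_sum_ne_bot fun j _ => ha j)] at hc
    exact not_top_lt hc
  set x : ι → ℝ := fun i => (a i).toReal
  have hx : ∀ i, a i = x i := fun i => (EReal.coe_toReal (ha_top i) (ha i)).symm
  have hxc : ∑ i, x i < c := by
    rwa [funext hx, ← EReal.coe_finset_sum, EReal.coe_lt_coe_iff] at hc
  set d := (c - ∑ i, x i) / (Fintype.card ι + 1)
  have hd : 0 < d := _root_.div_pos (by linarith) (by positivity)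
  refine ⟨fun i => x i + d, fun i => hx i ▸ EReal.coe_lt_coe_iff.2 (by linarith), ?_⟩
  have hcard : (Fintype.card ι : ℝ) * d ≤ c - ∑ i, x i := by
    rw [mul_div_assoc']
    exact div_le_of_le_mul₀ (by positivity) (by linarith) (by nlinarith)
  simp only [Finset.sum_add_distrib, Finset.sum_const, Finset.card_univ, _root_.nsmul_eq_mul]
  linarith

lemma measure_lt_le_of_forall_lt {Ω : Type*} [MeasurableSpace Ω] {μ : Measure Ω}
    {f : Ω → ℝ} {a : EReal} {b : ℝ≥0∞} (h : ∀ c : ℝ, a < c → μ {ω | c ≤ f ω} ≤ b) :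
    μ {ω | a < f ω} ≤ b := by
  have hunion : {ω | a < f ω} = ⋃ q : {q : ℚ // a < ((q : ℝ) : EReal)}, {ω | (q : ℝ) ≤ f ω} := by
    ext ω
    simp only [mem_ofPred_eq, mem_iUnion, Subtype.exists, exists_prop]
    constructor
    · intro h
      obtain ⟨q, haq, hqf⟩ := EReal.exists_rat_btwn_of_lt h
      exact ⟨q, haq, EReal.coe_le_coe_iff.1 hqf.le⟩
    · rintro ⟨q, haq, hqf⟩
      exact haq.trans_le (EReal.coe_le_coe_iff.2 hqf)
  have hanti : Antitone fun q : {q : ℚ // a < ((q : ℝ) : EReal)} => {ω | (q : ℝ) ≤ f ω} :=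
    fun q r hqr ω (hω : (r : ℝ) ≤ f ω) => le_trans (by exact_mod_cast hqr) hω
  rw [hunion, hanti.directed_le.measure_iUnion]
  exact iSup_le fun q => h q q.2

lemma LF_mono (L : ℝ → EReal) : Monotone (LF L) := fun _ _ hxy =>
  iSup₂_mono fun _ ht => EReal.sub_le_sub (EReal.coe_le_coe_iff.2
    (mul_le_mul_of_nonneg_left hxy ht.le)) le_rfl

lemma le_LF_of_geInv_lt {L : ℝ → EReal} {u y : ℝ} (h : geInv L u < y) : (u : EReal) ≤ LF L y := by
  obtain ⟨_, ⟨z, hz, rfl⟩, hzy⟩ := sInf_lt_iff.1 h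
  exact hz.trans (LF_mono L (EReal.coe_lt_coe_iff.1 hzy).le)

lemma coe_le_geInv_of_LF_lt {L : ℝ → EReal} {u m : ℝ} (h : LF L m < u) :
    (m : EReal) ≤ geInv L u := by
  refine le_sInf ?_
  rintro _ ⟨z, hz, rfl⟩
  by_contra! hzm
  exact (hz.trans (LF_mono L (EReal.coe_lt_coe_iff.1 hzm).le)).not_gt h

section Cramer

variable {Ω : Type*} [MeasurableSpace Ω] {μ : Measure Ω}

lemma coe_le_cramer_iff {X : Ω → ℝ} {t x : ℝ} :
    (x : EReal) ≤ cramer μ X t ↔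
      ENNReal.ofReal (Real.exp x) ≤ ∫⁻ ω, ENNReal.ofReal (Real.exp (t * X ω)) ∂μ := by
  rw [cramer, ← EReal.exp_le_exp_iff, ENNReal.exp_log, EReal.exp_coe]

lemma cramer_le_coe_iff {X : Ω → ℝ} {t x : ℝ} :
    cramer μ X t ≤ x ↔
      ∫⁻ ω, ENNReal.ofReal (Real.exp (t * X ω)) ∂μ ≤ ENNReal.ofReal (Real.exp x) := by
  rw [cramer, ← EReal.exp_le_exp_iff, ENNReal.exp_log, EReal.exp_coe]

lemma exists_lintegral_exp_le_of_lt_LF {Y : Ω → ℝ} {v y : ℝ}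
    (h : (v : EReal) < LF (cramer μ Y) y) :
    ∃ t, 0 < t ∧ ∫⁻ ω, ENNReal.ofReal (Real.exp (t * Y ω)) ∂μ ≤
      ENNReal.ofReal (Real.exp (t * y - v)) := by
  obtain ⟨t, h⟩ := lt_iSup_iff.1 h
  obtain ⟨ht, hlt⟩ := lt_iSup_iff.1 h
  refine ⟨t, ht, cramer_le_coe_iff.1 ?_⟩
  have hadd := (EReal.lt_sub_iff_add_lt (Or.inr (EReal.coe_ne_top v))
    (Or.inr (EReal.coe_ne_bot v))).1 hlt
  rw [EReal.coe_sub]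
  exact ((EReal.lt_sub_iff_add_lt (Or.inl (EReal.coe_ne_bot v))
    (Or.inl (EReal.coe_ne_top v))).2 (by rwa [add_comm])).le

lemma ofReal_exp_mul_measure_le_lintegral {Y : Ω → ℝ} (hY : AEMeasurable Y μ) {t : ℝ}
    (ht : 0 ≤ t) (c : ℝ) :
    ENNReal.ofReal (Real.exp (t * c)) * μ {ω | c ≤ Y ω} ≤
      ∫⁻ ω, ENNReal.ofReal (Real.exp (t * Y ω)) ∂μ := by
  have hsub : {ω | c ≤ Y ω} ⊆
      {ω | ENNReal.ofReal (Real.exp (t * c)) ≤ ENNReal.ofReal (Real.exp (t * Y ω))} :=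
    fun ω hω => ENNReal.ofReal_le_ofReal (Real.exp_le_exp.2 (mul_le_mul_of_nonneg_left hω ht))
  exact le_trans (by gcongr) (mul_meas_ge_le_lintegral₀ (by fun_prop) _)

lemma LF_cramer_le_of_ofReal_exp_neg_le {X : Ω → ℝ} (hX : AEMeasurable X μ) {m r : ℝ}
    (h : ENNReal.ofReal (Real.exp (-r)) ≤ μ {ω | m ≤ X ω}) : LF (cramer μ X) m ≤ r := by
  refine iSup₂_le fun t ht => ?_
  have hL : ((t * m - r : ℝ) : EReal) ≤ cramer μ X t := by
    rw [coe_le_cramer_iff, sub_eq_add_neg, Real.exp_add, ENNReal.ofReal_mul (Real.exp_nonneg _)]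
    calc ENNReal.ofReal (Real.exp (t * m)) * ENNReal.ofReal (Real.exp (-r))
        ≤ ENNReal.ofReal (Real.exp (t * m)) * μ {ω | m ≤ X ω} := by gcongr
      _ ≤ _ := ofReal_exp_mul_measure_le_lintegral hX ht.le m
  calc ((t * m : ℝ) : EReal) - cramer μ X t ≤ ((t * m : ℝ) : EReal) - ((t * m - r : ℝ) : EReal) :=
        EReal.sub_le_sub le_rfl hL
    _ = r := by rw [← EReal.coe_sub, sub_sub_cancel]

lemma geInv_cramer_ne_bot [IsProbabilityMeasure μ] {X : Ω → ℝ} (hX : AEMeasurable X μ) {u : ℝ}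
    (hu : 0 < u) : geInv (cramer μ X) u ≠ ⊥ := by
  have htail : Tendsto (fun m => μ {ω | m ≤ X ω}) atBot (𝓝 1) := by
    have := Measure.isProbabilityMeasure_map (μ := μ) hX
    have h := tendsto_measure_Ici_atBot (μ.map X)
    rw [measure_univ] at h
    exact h.congr fun m => Measure.map_apply_of_aemeasurable hX measurableSet_Ici
  have hlt : ENNReal.ofReal (Real.exp (-(u / 2))) < 1 :=
    ENNReal.ofReal_lt_one.2 (Real.exp_lt_one_iff.2 (by linarith))
  obtain ⟨m, hm⟩ := (htail.eventually (lt_mem_nhds hlt)).exists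
  have hLF : LF (cramer μ X) m < u :=
    (LF_cramer_le_of_ofReal_exp_neg_le hX hm.le).trans_lt (EReal.coe_lt_coe_iff.2 (by linarith))
  exact ne_bot_of_le_ne_bot (EReal.coe_ne_bot m) (coe_le_geInv_of_LF_lt hLF)

end Cramer

lemma prod_ofReal_exp_rpow {ι : Type*} (s : Finset ι) (a p : ι → ℝ) :
    ∏ i ∈ s, ENNReal.ofReal (Real.exp (a i)) ^ p i =
      ENNReal.ofReal (Real.exp (∑ i ∈ s, a i * p i)) := by
  rw [Real.exp_sum, ENNReal.ofReal_prod_of_nonneg fun _ _ => (Real.exp_pos _).le]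
  refine Finset.prod_congr rfl fun i _ => ?_
  rw [← EReal.exp_coe, ← EReal.exp_mul, ← EReal.coe_mul, EReal.exp_coe]

section Chernoff

variable {Ω ι : Type*} [MeasurableSpace Ω] {μ : Measure Ω} [Fintype ι] {X : ι → Ω → ℝ}

lemma lintegral_exp_mul_sum_le_prod (hX : ∀ i, AEMeasurable (X i) μ) {w : ι → ℝ}
    (hw_pos : ∀ i, 0 < w i) (hw_sum : ∑ i, w i = 1) (s : ℝ) :
    ∫⁻ ω, ENNReal.ofReal (Real.exp (s * ∑ i, X i ω)) ∂μ ≤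
      ∏ i, (∫⁻ ω, ENNReal.ofReal (Real.exp (s / w i * X i ω)) ∂μ) ^ w i := by
  have hpt : ∀ ω, ENNReal.ofReal (Real.exp (s * ∑ i, X i ω)) =
      ∏ i, ENNReal.ofReal (Real.exp (s / w i * X i ω)) ^ w i := by
    intro ω
    rw [prod_ofReal_exp_rpow, Finset.mul_sum]
    congr 2
    refine Finset.sum_congr rfl fun i _ => ?_
    field_simp [(hw_pos i).ne']
  simp_rw [hpt]
  exact ENNReal.lintegral_prod_norm_pow_le _ (fun i _ => by fun_prop) hw_sum
    fun i _ => (hw_pos i).le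

lemma measure_sum_ge_le_exp_neg_of_lt_LF [Nonempty ι] (hX : ∀ i, AEMeasurable (X i) μ)
    {y : ι → ℝ} {v : ℝ} (hy : ∀ i, (v : EReal) < LF (cramer μ (X i)) (y i)) :
    μ {ω | ∑ i, y i ≤ ∑ i, X i ω} ≤ ENNReal.ofReal (Real.exp (-v)) := by
  choose t ht hmgf using fun i => exists_lintegral_exp_le_of_lt_LF (hy i)
  set τ := (∑ i, (t i)⁻¹)⁻¹
  have hτ : 0 < τ := inv_pos.2 (Finset.sum_pos (fun i _ => inv_pos.2 (ht i)) Finset.univ_nonempty)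
  set w : ι → ℝ := fun i => τ / t i
  have hw_pos : ∀ i, 0 < w i := fun i => div_pos hτ (ht i)
  have hw_sum : ∑ i, w i = 1 := by
    simp only [w, div_eq_mul_inv, ← Finset.mul_sum]
    exact inv_mul_cancel₀ (inv_pos.1 hτ).ne'
  have hτw : ∀ i, τ / w i = t i := fun i => div_div_cancel₀ hτ.ne'
  have hexp : ∑ i, (t i * y i - v) * w i = τ * ∑ i, y i + -v := by
    calc ∑ i, (t i * y i - v) * w i = ∑ i, (τ * y i - v * w i) :=
          Finset.sum_congr rfl fun i _ => by simp only [w]; field_simp [(ht i).ne']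
      _ = τ * ∑ i, y i + -v := by
          rw [Finset.sum_sub_distrib, ← Finset.mul_sum, ← Finset.mul_sum, hw_sum]; ring
  have hmgf_sum : ∫⁻ ω, ENNReal.ofReal (Real.exp (τ * ∑ i, X i ω)) ∂μ ≤
      ENNReal.ofReal (Real.exp (τ * ∑ i, y i)) * ENNReal.ofReal (Real.exp (-v)) := by
    calc ∫⁻ ω, ENNReal.ofReal (Real.exp (τ * ∑ i, X i ω)) ∂μ
        ≤ ∏ i, (∫⁻ ω, ENNReal.ofReal (Real.exp (τ / w i * X i ω)) ∂μ) ^ w i :=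
          lintegral_exp_mul_sum_le_prod hX hw_pos hw_sum τ
      _ ≤ ∏ i, ENNReal.ofReal (Real.exp (t i * y i - v)) ^ w i := by
          gcongr with i
          · exact (hw_pos i).le
          · simpa only [hτw] using hmgf i
      _ = _ := by
          rw [prod_ofReal_exp_rpow, hexp, Real.exp_add, ENNReal.ofReal_mul (Real.exp_nonneg _)]
  have hmarkov := ofReal_exp_mul_measure_le_lintegral
    (Finset.aemeasurable_fun_sum Finset.univ fun i _ => hX i) hτ.le (∑ i, y i)
  exact (ENNReal.mul_le_mul_iff_right (ENNReal.ofReal_pos.2 (Real.exp_pos _)).ne'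
    ENNReal.ofReal_ne_top).1 (hmarkov.trans hmgf_sum)

lemma measure_sum_ge_le_exp_neg [Nonempty ι] (hX : ∀ i, AEMeasurable (X i) μ)
    {y : ι → ℝ} {u : ℝ} (hy : ∀ i, (u : EReal) ≤ LF (cramer μ (X i)) (y i)) :
    μ {ω | ∑ i, y i ≤ ∑ i, X i ω} ≤ ENNReal.ofReal (Real.exp (-u)) := by
  have hcont : Continuous fun v : ℝ => ENNReal.ofReal (Real.exp (-v)) :=
    ENNReal.continuous_ofReal.comp (by fun_prop)
  refine ge_of_tendsto ((hcont.tendsto u).mono_left (nhdsWithin_le_nhds (s := Iio u))) ?_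
  filter_upwards [self_mem_nhdsWithin] with v (hv : v < u)
  exact measure_sum_ge_le_exp_neg_of_lt_LF hX fun i => (EReal.coe_lt_coe_iff.2 hv).trans_le (hy i)

end Chernoff

theorem prob_sum_gt_sum_geInv_le_general (Ω : Type*) [MeasurableSpace Ω] (μ : Measure Ω)
    [IsProbabilityMeasure μ] (n : ℕ) (hn : 0 < n) (X : Fin n → Ω → ℝ)
    (hX : ∀ j, Measurable (X j))
    (u : ℝ) :
    μ {ω | (∑ j, geInv (cramer μ (X j)) u) < ((∑ j, X j ω : ℝ) : EReal)} ≤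
      ENNReal.ofReal (Real.exp (-u)) := by
  rcases le_or_gt u 0 with hu | hu
  · exact prob_le_one.trans (ENNReal.one_le_ofReal.2 (Real.one_le_exp (by linarith)))
  have : Nonempty (Fin n) := Fin.pos_iff_nonempty.1 hn
  refine measure_lt_le_of_forall_lt fun c hc => ?_
  obtain ⟨y, hy, hyc⟩ := EReal.exists_lt_forall_sum_le
    (fun j => geInv_cramer_ne_bot (hX j).aemeasurable hu) hc
  calc μ {ω | c ≤ ∑ j, X j ω} ≤ μ {ω | ∑ j, y j ≤ ∑ j, X j ω} :=
        measure_mono fun ω hω => hyc.trans hω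
    _ ≤ ENNReal.ofReal (Real.exp (-u)) :=
        measure_sum_ge_le_exp_neg (fun j => (hX j).aemeasurable) fun j => le_LF_of_geInv_lt (hy j)

/-- Corollary: quantile bound for sums. For random variables
`X_1,…,X_n` (not assumed independent),
`P(X_1+⋯+X_n > L_{X_1}^{*←}(u)+⋯+L_{X_n}^{*←}(u)) ≤ e^{-u}` for all real `u`. -/
theorem prob_sum_gt_sum_geInv_le (Ω : Type*) [MeasurableSpace Ω] (μ : Measure Ω)
    [IsProbabilityMeasure μ] (n : ℕ) (hn : 0 < n) (X : Fin n → Ω → ℝ)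
    (hX : ∀ j, Measurable (X j))
    (hfin : ∀ j, ∃ t : ℝ, 0 < t ∧ ∫⁻ ω, ENNReal.ofReal (Real.exp (t * X j ω)) ∂μ ≠ ⊤)
    (u : ℝ) :
    μ {ω | (∑ j, geInv (cramer μ (X j)) u) < ((∑ j, X j ω : ℝ) : EReal)} ≤
      ENNReal.ofReal (Real.exp (-u)) :=
  prob_sum_gt_sum_geInv_le_general Ω μ n hn X hX u
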